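/- Let K be a field, let A be a configuration in K[t_1,…,t_d], and for each i = 1,…,d let B_i = {m_1^{(i)},…,m_{λ_i}^{(i)}} be a configuration in a polynomial ring K[u^{(i)}] in μ_i variables, where the variable sets u^{(1)},…,u^{(d)} are pairwise disjoint. For each monomial M of the nested configuration A(B_1,…,B_d) fix one expression M = m_{j_1}^{(i_1)}⋯m_{j_r}^{(i_r)} with t_{i_1}⋯t_{i_r} ∈ A; let φ_0 : K[x_M : M ∈ A(B_1,…,B_d)] → K[y] be the K-algebra homomorphism sending x_M to the variable y_{i_1⋯i_r}, where K[y] is the polynomial ring presenting A via π_0(y_{i_1⋯i_r}) = t_{i_1}⋯t_{i_r}, and for j = 1,…,d let φ_j send x_M to ∏_{k : i_k = j} z_{j_k}^{(j)} in K[z_1^{(j)},…,z_{λ_j}^{(j)}]. If f is a binomial in K[x_M : M ∈ A(B_1,…,B_d)] such that φ_j(f) ∈ I_{B_j} for all j = 1,…,d, then φ_0(f) belongs to the toric ideal I_A. -/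

import Mathlib

open MvPolynomial

/-- Total degree of an exponent vector. -/
def expDeg {σ : Type*} (a : σ →₀ ℕ) : ℕ := a.sum fun _ e => e

/-- A set of monomials (given by exponent vectors) is a configuration if some nonnegative
weight vector gives every member weight `1`. -/
def IsConfig {σ : Type*} (A : Set (σ →₀ ℕ)) : Prop :=
  ∃ w : σ → ℝ, (∀ i, 0 ≤ w i) ∧ ∀ a ∈ A, (a.sum fun i e => w i * (e : ℝ)) = 1

/-- The `K`-algebra homomorphism sending the variable indexed by `s` to the monomial with
exponent vector `v s`. -/
noncomputable def toricHom (K : Type*) [Field K] {σ τ : Type*} (v : σ → (τ →₀ ℕ)) :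
    MvPolynomial σ K →ₐ[K] MvPolynomial τ K :=
  MvPolynomial.aeval fun s => MvPolynomial.monomial (v s) (1 : K)

/-- The toric ideal of a family of monomials (given by exponent vectors). -/
noncomputable def toricIdeal (K : Type*) [Field K] {σ τ : Type*} (v : σ → (τ →₀ ℕ)) :
    Ideal (MvPolynomial σ K) :=
  RingHom.ker (toricHom K v)

/-- `r` is a monomial order: a linear order, compatible with addition, with `0` least. -/
def IsMonomialOrder {σ : Type*} (r : (σ →₀ ℕ) → (σ →₀ ℕ) → Prop) : Prop :=
  IsLinearOrder (σ →₀ ℕ) r ∧ (∀ a, r 0 a) ∧ ∀ a b c, r a b → r (a + c) (b + c)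

/-- `m` is the leading monomial (exponent) of `f` with respect to the monomial order `r`. -/
def IsLeadingMonomial {σ K : Type*} [CommSemiring K]
    (r : (σ →₀ ℕ) → (σ →₀ ℕ) → Prop) (f : MvPolynomial σ K) (m : σ →₀ ℕ) : Prop :=
  m ∈ f.support ∧ ∀ m' ∈ f.support, r m' m

/-- `G` is a Gröbner basis of `I` w.r.t. `r`: `G ⊆ I` and the leading monomial of every
nonzero element of `I` is divisible by the leading monomial of some element of `G`. -/
def IsGroebnerBasis {σ K : Type*} [Field K] (r : (σ →₀ ℕ) → (σ →₀ ℕ) → Prop)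
    (I : Ideal (MvPolynomial σ K)) (G : Set (MvPolynomial σ K)) : Prop :=
  (∀ g ∈ G, g ∈ I) ∧
  ∀ f ∈ I, f ≠ 0 → ∀ mf, IsLeadingMonomial r f mf →
    ∃ g ∈ G, ∃ mg, IsLeadingMonomial r g mg ∧ mg ≤ mf

/-- `G` is the reduced Gröbner basis: a Gröbner basis, leading coefficients `1`, and no
monomial of an element is divisible by the leading monomial of another element. -/
def IsReducedGroebnerBasis {σ K : Type*} [Field K] (r : (σ →₀ ℕ) → (σ →₀ ℕ) → Prop)
    (I : Ideal (MvPolynomial σ K)) (G : Set (MvPolynomial σ K)) : Prop :=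
  IsGroebnerBasis r I G ∧
  (∀ g ∈ G, ∀ m, IsLeadingMonomial r g m → MvPolynomial.coeff m g = 1) ∧
  ∀ g ∈ G, ∀ g' ∈ G, g' ≠ g → ∀ m ∈ g.support, ∀ m', IsLeadingMonomial r g' m' → ¬ m' ≤ m

/-- A homogeneous binomial of degree 2, i.e. a difference of two distinct quadratic monomials. -/
def IsQuadBinomial {σ K : Type*} [CommRing K] (f : MvPolynomial σ K) : Prop :=
  ∃ a b : σ →₀ ℕ, a ≠ b ∧ expDeg a = 2 ∧ expDeg b = 2 ∧
    f = MvPolynomial.monomial a (1 : K) - MvPolynomial.monomial b (1 : K)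

/-- `I` possesses a quadratic Gröbner basis. -/
def HasQuadraticGB {σ K : Type*} [Field K] (I : Ideal (MvPolynomial σ K)) : Prop :=
  ∃ r, IsMonomialOrder r ∧ ∃ G, (∀ g ∈ G, IsQuadBinomial g) ∧ IsGroebnerBasis r I G

/-- The initial ideal of `I` w.r.t. `r`: ideal generated by the leading monomials of the
nonzero elements of `I`. -/
noncomputable def initialIdeal {σ K : Type*} [Field K] (r : (σ →₀ ℕ) → (σ →₀ ℕ) → Prop)
    (I : Ideal (MvPolynomial σ K)) : Ideal (MvPolynomial σ K) :=
  Ideal.span {p | ∃ f ∈ I, f ≠ 0 ∧ ∃ m, IsLeadingMonomial r f m ∧ p = MvPolynomial.monomial m (1 : K)}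

/-- A squarefree exponent vector. -/
def SquarefreeExp {σ : Type*} (m : σ →₀ ℕ) : Prop := ∀ i, m i ≤ 1

/-- The nested configuration `A(B_1, …, B_d)`. -/
def NestedConfig {d : ℕ} {lam mu : Fin d → ℕ} (A : Set (Fin d →₀ ℕ))
    (B : (i : Fin d) → Fin (lam i) → (Fin (mu i) →₀ ℕ)) :
    Set ((Σ i : Fin d, Fin (mu i)) →₀ ℕ) :=
  { M | ∃ n : ℕ, 1 ≤ n ∧ ∃ s : Fin n → Σ i : Fin d, Fin (lam i),
      (∑ k, Finsupp.single (s k).1 1) ∈ A ∧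
      M = ∑ k, Finsupp.mapDomain (Sigma.mk (s k).1) (B (s k).1 (s k).2) }

/-- The exponent vector of `φ_j(x_M)` determined by the chosen standard expressions. -/
noncomputable def phiExp {d : ℕ} {lam mu : Fin d → ℕ} {A : Set (Fin d →₀ ℕ)}
    {B : (i : Fin d) → Fin (lam i) → (Fin (mu i) →₀ ℕ)}
    (n : ↥(NestedConfig A B) → ℕ)
    (s : (M : ↥(NestedConfig A B)) → Fin (n M) → Σ i : Fin d, Fin (lam i))
    (j : Fin d) (M : ↥(NestedConfig A B)) : Fin (lam j) →₀ ℕ :=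
  ∑ k : Fin (n M), if h : (s M k).1 = j
    then Finsupp.single (Fin.cast (congrArg lam h) (s M k).2) 1 else 0

/-! Writing `e_M = ∑ₖ e_{i_k}` for the exponent of `φ₀(x_M)` after `π₀`, the `j`-th coordinate of
`e_M` is the number of factors of `M` taken from `B_j`, i.e. the degree of `φ_j(x_M)`. A binomial
`x^a - x^b` lies in a toric ideal iff both monomials have the same image, so `φ₀(f) ∈ I_A` means
`∑ a_M e_M = ∑ b_M e_M`. Coordinatewise this is `deg φ_j(x^a) = deg φ_j(x^b)`, and this follows
from `φ_j(f) ∈ I_{B_j}`: since `B_j` is a configuration, a weight vector giving every `m_k^{(j)}`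
weight `1` reads the degree of a monomial in the `z^{(j)}` off its image under `π_j`. -/

open Finsupp

section Toric

variable {K : Type*} [Field K] {σ τ : Type*}

theorem toricHom_monomial_one (v : σ → τ →₀ ℕ) (a : σ →₀ ℕ) :
    toricHom K v (monomial a 1) = monomial (linearCombination ℕ v a) 1 := by
  simp only [toricHom, aeval_monomial, map_one, one_mul, linearCombination_apply,
    monomial_finsupp_sum_index, monomial_pow, one_pow]

theorem toricHom_binomial (v : σ → τ →₀ ℕ) (a b : σ →₀ ℕ) :
    toricHom K v (monomial a 1 - monomial b 1) =
      monomial (linearCombination ℕ v a) 1 - monomial (linearCombination ℕ v b) 1 := by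
  rw [map_sub, toricHom_monomial_one, toricHom_monomial_one]

theorem binomial_mem_toricIdeal_iff (v : σ → τ →₀ ℕ) (a b : σ →₀ ℕ) :
    monomial a (1 : K) - monomial b 1 ∈ toricIdeal K v ↔
      linearCombination ℕ v a = linearCombination ℕ v b := by
  rw [toricIdeal, RingHom.mem_ker, toricHom_binomial, sub_eq_zero, monomial_left_inj one_ne_zero]

end Toric

theorem weight_linearCombination_eq_degree {σ τ R : Type*} [AddCommMonoidWithOne R]
    {v : σ → τ →₀ ℕ} {w : τ → R} (hw : ∀ i, weight w (v i) = 1) (a : σ →₀ ℕ) :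
    weight w (linearCombination ℕ v a) = a.degree := by
  induction a using Finsupp.induction_linear with
  | zero => simp
  | add a b ha hb => simp only [map_add, ha, hb, Nat.cast_add]
  | single i e => simp [hw]

theorem IsConfig.degree_eq_of_linearCombination_eq {σ τ : Type*} {v : σ → τ →₀ ℕ}
    (hv : IsConfig (Set.range v)) {a b : σ →₀ ℕ}
    (h : linearCombination ℕ v a = linearCombination ℕ v b) : a.degree = b.degree := by
  obtain ⟨w, -, hw⟩ := hv
  have hw' : ∀ i, weight w (v i) = 1 := fun i => by
    rw [weight_apply, ← hw _ ⟨i, rfl⟩]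
    simp only [nsmul_eq_mul, mul_comm]
  exact_mod_cast (weight_linearCombination_eq_degree hw' a).symm.trans
    ((congrArg _ h).trans (weight_linearCombination_eq_degree hw' b))

theorem degree_phiExp {d : ℕ} {lam mu : Fin d → ℕ} {A : Set (Fin d →₀ ℕ)}
    {B : (i : Fin d) → Fin (lam i) → (Fin (mu i) →₀ ℕ)}
    (n : ↥(NestedConfig A B) → ℕ)
    (s : (M : ↥(NestedConfig A B)) → Fin (n M) → Σ i : Fin d, Fin (lam i))
    (j : Fin d) (M : ↥(NestedConfig A B)) :
    (phiExp n s j M).degree = (∑ k, single (s M k).1 1) j := by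
  rw [phiExp, map_sum, Finset.sum_apply']
  refine Finset.sum_congr rfl fun k _ => ?_
  by_cases h : (s M k).1 = j <;> simp [h]

theorem linearCombination_apply_eq_degree {σ ι κ : Type*} {e : σ → ι →₀ ℕ} {p : σ → κ →₀ ℕ}
    {j : ι} (h : ∀ i, (p i).degree = e i j) (a : σ →₀ ℕ) :
    linearCombination ℕ e a j = (linearCombination ℕ p a).degree := by
  induction a using Finsupp.induction_linear with
  | zero => simp
  | add a b ha hb => simp only [map_add, Finsupp.add_apply, ha, hb]
  | single i c => simp [h]

theorem phi_zero_mem_toricIdeal_general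
    {K : Type*} [Field K] {d : ℕ} {lam mu : Fin d → ℕ}
    (A : Finset (Fin d →₀ ℕ))
    (B : (i : Fin d) → Fin (lam i) → (Fin (mu i) →₀ ℕ))
    (hB : ∀ i, IsConfig (Set.range (B i)))
    -- a fixed expression `M = m_{j_1}^{(i_1)} ⋯ m_{j_r}^{(i_r)}` for each `M ∈ A(B_1,…,B_d)`
    (n : ↥(NestedConfig (↑A : Set (Fin d →₀ ℕ)) B) → ℕ)
    (s : (M : ↥(NestedConfig (↑A : Set (Fin d →₀ ℕ)) B)) → Fin (n M) → Σ i : Fin d, Fin (lam i))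
    (hsA : ∀ M, (∑ k, Finsupp.single (s M k).1 1) ∈ A)
    -- a binomial `f`
    (f : MvPolynomial (↥(NestedConfig (↑A : Set (Fin d →₀ ℕ)) B)) K)
    (a b : (↥(NestedConfig (↑A : Set (Fin d →₀ ℕ)) B)) →₀ ℕ)
    (hf : f = MvPolynomial.monomial a (1 : K) - MvPolynomial.monomial b (1 : K))
    -- `φ_j(f) ∈ I_{B_j}` for all `j`
    (hphi : ∀ j : Fin d, toricHom K (phiExp n s j) f ∈ toricIdeal K (B j)) :
    -- `φ_0(f) ∈ I_A`, where `φ_0(x_M) = y_{i_1⋯i_r}` and `π_0(y_{i_1⋯i_r}) = t_{i_1}⋯t_{i_r}`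
    toricHom K (fun M : ↥(NestedConfig (↑A : Set (Fin d →₀ ℕ)) B) =>
        Finsupp.single (⟨∑ k, Finsupp.single (s M k).1 1, hsA M⟩ : {x : Fin d →₀ ℕ // x ∈ A}) 1) f
      ∈ toricIdeal K (fun y : {x : Fin d →₀ ℕ // x ∈ A} => y.1) := by
  subst hf
  rw [toricHom_binomial, binomial_mem_toricIdeal_iff, linearCombination_linearCombination,
    linearCombination_linearCombination]
  simp only [linearCombination_single, one_smul]
  ext j
  rw [linearCombination_apply_eq_degree (degree_phiExp n s j),
    linearCombination_apply_eq_degree (degree_phiExp n s j)]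
  have hphi_j := hphi j
  rw [toricHom_binomial, binomial_mem_toricIdeal_iff] at hphi_j
  exact (hB j).degree_eq_of_linearCombination_eq hphi_j

/-- Lemma `keylemma`, final part: if `φ_j(f) ∈ I_{B_j}` for all `j = 1,…,d`
for a binomial `f`, then `φ_0(f)` lies in the toric ideal `I_A`. -/
theorem phi_zero_mem_toricIdeal
    {K : Type*} [Field K] {d : ℕ} {lam mu : Fin d → ℕ}
    (A : Finset (Fin d →₀ ℕ))
    (B : (i : Fin d) → Fin (lam i) → (Fin (mu i) →₀ ℕ))
    (hA : IsConfig (↑A : Set (Fin d →₀ ℕ)))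
    (hB : ∀ i, IsConfig (Set.range (B i)))
    -- a fixed expression `M = m_{j_1}^{(i_1)} ⋯ m_{j_r}^{(i_r)}` for each `M ∈ A(B_1,…,B_d)`
    (n : ↥(NestedConfig (↑A : Set (Fin d →₀ ℕ)) B) → ℕ)
    (s : (M : ↥(NestedConfig (↑A : Set (Fin d →₀ ℕ)) B)) → Fin (n M) → Σ i : Fin d, Fin (lam i))
    (hn : ∀ M, 1 ≤ n M)
    (hsA : ∀ M, (∑ k, Finsupp.single (s M k).1 1) ∈ A)
    (hsM : ∀ M : ↥(NestedConfig (↑A : Set (Fin d →₀ ℕ)) B),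
      (M : (Σ i : Fin d, Fin (mu i)) →₀ ℕ) =
        ∑ k, Finsupp.mapDomain (Sigma.mk (s M k).1) (B (s M k).1 (s M k).2))
    -- a binomial `f`
    (f : MvPolynomial (↥(NestedConfig (↑A : Set (Fin d →₀ ℕ)) B)) K)
    (a b : (↥(NestedConfig (↑A : Set (Fin d →₀ ℕ)) B)) →₀ ℕ)
    (hf : f = MvPolynomial.monomial a (1 : K) - MvPolynomial.monomial b (1 : K))
    -- `φ_j(f) ∈ I_{B_j}` for all `j`
    (hphi : ∀ j : Fin d, toricHom K (phiExp n s j) f ∈ toricIdeal K (B j)) :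
    -- `φ_0(f) ∈ I_A`, where `φ_0(x_M) = y_{i_1⋯i_r}` and `π_0(y_{i_1⋯i_r}) = t_{i_1}⋯t_{i_r}`
    toricHom K (fun M : ↥(NestedConfig (↑A : Set (Fin d →₀ ℕ)) B) =>
        Finsupp.single (⟨∑ k, Finsupp.single (s M k).1 1, hsA M⟩ : {x : Fin d →₀ ℕ // x ∈ A}) 1) f
      ∈ toricIdeal K (fun y : {x : Fin d →₀ ℕ // x ∈ A} => y.1) :=
  phi_zero_mem_toricIdeal_general A B hB n s hsA f a b hf hphi
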